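/- (Step 2 of the proof of Theorem 1.) Under the standing hypotheses, θ_{j,e_k} = θ̄_{j,e_k} for every item j with j > 2K and every k ∈ {1, …, K}. -/

import Mathlib

open Finset

/-- `u ⪰ v`: componentwise domination of binary vectors. -/
def dominates {n : ℕ} (u v : Fin n → Bool) : Prop := ∀ i, v i = true → u i = true

instance {n : ℕ} (u v : Fin n → Bool) : Decidable (dominates u v) :=
  inferInstanceAs (Decidable (∀ i, v i = true → u i = true))

/-- The all-zeros attribute profile. -/
def allZero (K : ℕ) : Fin K → Bool := fun _ => false

/-- The all-ones attribute profile. -/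
def allOne (K : ℕ) : Fin K → Bool := fun _ => true

/-- The `k`-th standard basis attribute profile `e_k`. -/
def basis {K : ℕ} (k : Fin K) : Fin K → Bool := fun i => decide (i = k)

/-- `P(R = r | Q, Θ, p) = Σ_α p_α ∏_j θ_{j,α}^{r_j} (1-θ_{j,α})^{1-r_j}`. -/
def respProb {J K : ℕ} (θ : Fin J → (Fin K → Bool) → ℝ) (p : (Fin K → Bool) → ℝ)
    (r : Fin J → Bool) : ℝ :=
  ∑ α : Fin K → Bool, p α * ∏ j, (if r j then θ j α else 1 - θ j α)

/-- The `(r, α)` entry of the T-matrix: `t_{r,α}(Θ) = ∏_{j : r_j = 1} θ_{j,α}`. -/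
def tEntry {J K : ℕ} (θ : Fin J → (Fin K → Bool) → ℝ) (r : Fin J → Bool)
    (α : Fin K → Bool) : ℝ :=
  ∏ j, (if r j then θ j α else 1)

/-- The `r`-entry of the vector `T(Q,Θ) p`. -/
def Tp {J K : ℕ} (θ : Fin J → (Fin K → Bool) → ℝ) (p : (Fin K → Bool) → ℝ)
    (r : Fin J → Bool) : ℝ :=
  ∑ α : Fin K → Bool, tEntry θ r α * p α

/-- All item parameters lie in the open unit interval. -/
def ThetaValid {J K : ℕ} (θ : Fin J → (Fin K → Bool) → ℝ) : Prop :=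
  ∀ j α, θ j α ∈ Set.Ioo (0 : ℝ) 1

/-- A valid class distribution: every `p_α ∈ (0,1)` and `Σ_α p_α = 1`. -/
def PValid {K : ℕ} (p : (Fin K → Bool) → ℝ) : Prop :=
  (∀ α, p α ∈ Set.Ioo (0 : ℝ) 1) ∧ ∑ α : Fin K → Bool, p α = 1

/-- Model restriction (R1) with respect to the Q-matrix `Q`. -/
def R1 {J K : ℕ} (Q : Fin J → Fin K → Bool) (θ : Fin J → (Fin K → Bool) → ℝ) : Prop :=
  ∀ j : Fin J,
    (∀ α α' : Fin K → Bool, dominates α (Q j) → dominates α' (Q j) → θ j α = θ j α') ∧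
    (∀ αs α' : Fin K → Bool, dominates αs (Q j) → θ j α' ≤ θ j αs) ∧
    (∀ α' : Fin K → Bool, θ j (allZero K) ≤ θ j α')

/-- Model restriction (R2) with respect to the Q-matrix `Q`. -/
def R2 {J K : ℕ} (Q : Fin J → Fin K → Bool) (θ : Fin J → (Fin K → Bool) → ℝ) : Prop :=
  ∀ (k : Fin K) (j : Fin J), Q j = basis k →
    ∀ α : Fin K → Bool, α k = false → θ j α < θ j (allOne K)

/-- Condition (C1): the first `2K` rows of `Q` form two copies of the identity. -/
def C1 {J K : ℕ} (Q : Fin J → Fin K → Bool) : Prop :=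
  ∀ (k : Fin K) (h1 : (k : ℕ) < J) (h2 : K + (k : ℕ) < J),
    Q ⟨k, h1⟩ = basis k ∧ Q ⟨K + (k : ℕ), h2⟩ = basis k

/-- Condition (C2): for every `k`, `(θ_{j,e_k})_{j > 2K} ≠ (θ_{j,0})_{j > 2K}`. -/
def C2 {J K : ℕ} (θ : Fin J → (Fin K → Bool) → ℝ) : Prop :=
  ∀ k : Fin K, ∃ j : Fin J, 2 * K ≤ (j : ℕ) ∧ θ j (basis k) ≠ θ j (allZero K)

/-!
Shifting the columns of the T-matrix by constants turns `T(Q, Θ) p = T(Q, Θ̄) p̄` into equalities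
of the moments `∑_α p_α ∏_{j ∈ S} (θ_{j,α} - u_j)`. Shifting an identity item of attribute `l` by
its top value removes every profile with `α_l = 1`. With two identity items per attribute this can
be done in both models at once for all `l ≠ k`, leaving only the profiles `0` and `e_k` with
nonzero `Θ`-weights, unless both tops of some attribute are strictly lower in `Θ̄`; a peeling
argument through the item of (C2) rules that out. What remains is a two-point mixture seen through
the items `k`, `K + k` and `j`, whose moments determine `θ_{j,0} + θ_{j,e_k}`, while
`θ_{j,0} = θ̄_{j,0}` follows by removing every profile but `0`.
-/

noncomputable section

/-- The factor of an item in a row of the shifted T-matrix `T(Θ - u)`; `none` leaves the item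
out of the row. -/
def shiftFactor (c : Option ℝ) (x : ℝ) : ℝ := c.elim 1 (x - ·)

@[simp] lemma shiftFactor_none (x : ℝ) : shiftFactor none x = 1 := rfl

@[simp] lemma shiftFactor_some (u x : ℝ) : shiftFactor (some u) x = x - u := rfl

def powShift (s : Bool) : Option ℝ := if s then some 0 else none

@[simp] lemma shiftFactor_powShift (s : Bool) (x : ℝ) :
    shiftFactor (powShift s) x = x ^ s.toNat := by
  cases s <;> simp [powShift]

section Moments

variable {J K : ℕ}

def shiftProd (c : Fin J → Option ℝ) (θ : Fin J → (Fin K → Bool) → ℝ) (α : Fin K → Bool) :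
    ℝ :=
  ∏ i, shiftFactor (c i) (θ i α)

lemma shiftProd_update {c : Fin J → Option ℝ} {i : Fin J} (hi : c i = none) (v : Option ℝ)
    (θ : Fin J → (Fin K → Bool) → ℝ) (α : Fin K → Bool) :
    shiftProd (Function.update c i v) θ α = shiftFactor v (θ i α) * shiftProd c θ α := by
  simp only [shiftProd, Function.apply_update (fun l (o : Option ℝ) => shiftFactor o (θ l α)),
    prod_update_of_mem (mem_univ i)]
  rw [← mul_prod_erase univ _ (mem_univ i), hi, shiftFactor_none, one_mul, sdiff_singleton_eq_erase]

lemma sum_mul_shiftProd_eq_sum_Tp (c : Fin J → Option ℝ) (θ : Fin J → (Fin K → Bool) → ℝ)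
    (p : (Fin K → Bool) → ℝ) :
    ∑ α, p α * shiftProd c θ α =
      ∑ T ∈ (univ.filter fun i => (c i).isSome).powerset,
        (∏ i ∈ (univ.filter fun i => (c i).isSome) \ T, -(c i).getD 0) *
          Tp θ p (fun i => decide (i ∈ T)) := by
  set S := univ.filter fun i => (c i).isSome
  have hprod : ∀ α, shiftProd c θ α = ∏ i ∈ S, (θ i α + -(c i).getD 0) := by
    intro α
    rw [shiftProd, prod_filter]
    refine prod_congr rfl fun i _ => ?_
    cases c i <;> simp [sub_eq_add_neg]
  have htEntry : ∀ (T : Finset (Fin J)) α,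
      tEntry θ (fun i => decide (i ∈ T)) α = ∏ i ∈ T, θ i α := by
    intro T α
    simp [tEntry, prod_ite_mem]
  simp only [hprod, prod_add, mul_sum, Tp, htEntry]
  rw [sum_comm]
  exact sum_congr rfl fun T _ => sum_congr rfl fun α _ => by ring

theorem sum_mul_shiftProd_eq {θ θb : Fin J → (Fin K → Bool) → ℝ} {p pb : (Fin K → Bool) → ℝ}
    (hT : ∀ r, Tp θ p r = Tp θb pb r) (c : Fin J → Option ℝ) :
    ∑ α, p α * shiftProd c θ α = ∑ α, pb α * shiftProd c θb α := by
  simp only [sum_mul_shiftProd_eq_sum_Tp, hT]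

end Moments

section Restrictions

variable {J K : ℕ} {Q : Fin J → Fin K → Bool} {θ θb : Fin J → (Fin K → Bool) → ℝ}
  {p pb : (Fin K → Bool) → ℝ}

lemma dominates_allOne {n : ℕ} (v : Fin n → Bool) : dominates (allOne n) v := fun _ _ => rfl

lemma dominates_basis_iff {α : Fin K → Bool} {k : Fin K} :
    dominates α (basis k) ↔ α k = true :=
  ⟨fun h => h k (by simp [basis]), fun h i hi => by rwa [of_decide_eq_true hi]⟩

lemma basis_self (k : Fin K) : basis k k = true := by simp [basis]

lemma basis_ne_allZero (k : Fin K) : basis k ≠ allZero K :=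
  fun h => by simpa [basis, allZero] using congrFun h k

lemma R1.le_top (hR : R1 Q θ) (i : Fin J) (α : Fin K → Bool) : θ i α ≤ θ i (allOne K) :=
  (hR i).2.1 _ α (dominates_allOne _)

lemma R1.eq_top (hR : R1 Q θ) {i : Fin J} {k : Fin K} (hQ : Q i = basis k)
    {α : Fin K → Bool} (hα : α k = true) : θ i α = θ i (allOne K) :=
  (hR i).1 α _ (hQ ▸ dominates_basis_iff.2 hα) (dominates_allOne _)

lemma R2.lt_top (hR : R2 Q θ) {i : Fin J} {k : Fin K} (hQ : Q i = basis k)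
    {α : Fin K → Bool} (hα : α k = false) : θ i α < θ i (allOne K) :=
  hR k i hQ α hα

lemma R2.allZero_lt_basis (hR1 : R1 Q θ) (hR2 : R2 Q θ) {i : Fin J} {k : Fin K}
    (hQ : Q i = basis k) : θ i (allZero K) < θ i (basis k) :=
  hR1.eq_top hQ (basis_self k) ▸ hR2.lt_top hQ rfl

lemma allZero_lt_sum_mul (hp : PValid p) (hR1 : R1 Q θ) (hR2 : R2 Q θ) {i : Fin J} {k : Fin K}
    (hQ : Q i = basis k) : θ i (allZero K) < ∑ α, p α * θ i α := by
  calc θ i (allZero K) = ∑ α, p α * θ i (allZero K) := by rw [← sum_mul, hp.2, one_mul]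
    _ < ∑ α, p α * θ i α := by
      refine sum_lt_sum (fun α _ => ?_) ⟨allOne K, mem_univ _, ?_⟩
      · exact mul_le_mul_of_nonneg_left ((hR1 i).2.2 α) (hp.1 α).1.le
      · exact mul_lt_mul_of_pos_left (hR2.lt_top hQ rfl) (hp.1 _).1

lemma sum_mul_le_allOne (hp : PValid p) (hR1 : R1 Q θ) (i : Fin J) :
    ∑ α, p α * θ i α ≤ θ i (allOne K) :=
  calc ∑ α, p α * θ i α ≤ ∑ α, p α * θ i (allOne K) :=
        sum_le_sum fun α _ => mul_le_mul_of_nonneg_left (hR1.le_top i α) (hp.1 α).1.le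
    _ = θ i (allOne K) := by rw [← sum_mul, hp.2, one_mul]

lemma sum_mul_apply_eq (hT : ∀ r, Tp θ p r = Tp θb pb r) (i : Fin J) :
    ∑ α, p α * θ i α = ∑ α, pb α * θb i α := by
  have h := sum_mul_shiftProd_eq hT (Function.update (fun _ => none) i (some 0))
  simp only [shiftProd_update (c := fun _ => none) rfl] at h
  simpa [shiftProd] using h

lemma allZero_lt_allOne_of_sum_mul_eq (hp : PValid p) (hpb : PValid pb) (hR1 : R1 Q θ)
    (hR2 : R2 Q θ) (hR1b : R1 Q θb) {i : Fin J} {k : Fin K} (hQ : Q i = basis k)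
    (hmean : ∑ α, p α * θ i α = ∑ α, pb α * θb i α) : θ i (allZero K) < θb i (allOne K) :=
  (allZero_lt_sum_mul hp hR1 hR2 hQ).trans_le (hmean ▸ sum_mul_le_allOne hpb hR1b i)

end Restrictions

section TwoPointMixtures

lemma exists_eq_of_two_point_moments {e s t : Fin 2 → ℝ} {c x y : ℝ} (hs : s 0 ≠ s 1)
    (ht : t 0 ≠ t 1) (hc : c ≠ 0)
    (h : ∀ a b : Bool,
      ∑ i, e i * (s i ^ a.toNat * t i ^ b.toNat) = c * (x ^ a.toNat * y ^ b.toNat)) :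
    ∃ i, x = s i ∧ y = t i := by
  have h00 := h false false
  have h10 := h true false
  have h01 := h false true
  have h11 := h true true
  simp only [Fin.sum_univ_two, Bool.toNat_true, Bool.toNat_false, pow_one, pow_zero, mul_one,
    one_mul] at h00 h10 h01 h11
  have hdet : e 0 * e 1 * (s 0 - s 1) * (t 0 - t 1) = 0 := by
    linear_combination (e 0 * s 0 * t 0 + e 1 * s 1 * t 1) * h00 + c * h11 -
      (e 0 * t 0 + e 1 * t 1) * h10 - c * x * h01
  have he : e 0 = 0 ∨ e 1 = 0 := by
    simpa [sub_eq_zero, hs, ht] using hdet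
  rcases he with he | he
  · refine ⟨1, mul_left_cancel₀ hc ?_, mul_left_cancel₀ hc ?_⟩
    · linear_combination -h10 + s 1 * h00 + (s 0 - s 1) * he
    · linear_combination -h01 + t 1 * h00 + (t 0 - t 1) * he
  · refine ⟨0, mul_left_cancel₀ hc ?_, mul_left_cancel₀ hc ?_⟩
    · linear_combination -h10 + s 0 * h00 + (s 1 - s 0) * he
    · linear_combination -h01 + t 0 * h00 + (t 1 - t 0) * he

/-- `W a` is a signed mixture truncated below `a`. By strong induction on `a` the atoms strictly
below `a` already sit at the two points, which leaves a single new atom for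
`exists_eq_of_two_point_moments`. -/
theorem exists_eq_of_truncated_moments {ι : Type*} [PartialOrder ι] [Fintype ι]
    {W : ι → ι → ℝ} {E : ι → Fin 2 → ℝ} {x y : ι → ℝ} {s t : Fin 2 → ℝ}
    (hs : s 0 ≠ s 1) (ht : t 0 ≠ t 1) (hW : ∀ a b, W a b ≠ 0 → b ≤ a ∧ W b b ≠ 0)
    (h : ∀ a (u v : Bool), ∑ i, E a i * (s i ^ u.toNat * t i ^ v.toNat) =
      ∑ b, W a b * (x b ^ u.toNat * y b ^ v.toNat))
    (a : ι) (ha : W a a ≠ 0) : ∃ i, x a = s i ∧ y a = t i := by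
  classical
  induction a using WellFoundedLT.induction with
  | _ a ih =>
  set P : ι → Prop := fun b => x b = s 0 ∧ y b = t 0
  set F : Fin 2 → ℝ := ![∑ b ∈ (univ.erase a).filter P, W a b,
    ∑ b ∈ (univ.erase a).filter (¬ P ·), W a b]
  have hrest : ∀ u v : Bool, ∑ b ∈ univ.erase a, W a b * (x b ^ u.toNat * y b ^ v.toNat) =
      ∑ i, F i * (s i ^ u.toNat * t i ^ v.toNat) := by
    intro u v
    rw [← sum_filter_add_sum_filter_not _ P, Fin.sum_univ_two]
    simp only [F, Matrix.cons_val_zero, Matrix.cons_val_one, sum_mul]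
    congr 1
    · refine sum_congr rfl fun b hb => ?_
      obtain ⟨hx, hy⟩ := (mem_filter.1 hb).2
      rw [hx, hy]
    · refine sum_congr rfl fun b hb => ?_
      obtain ⟨hba, hPb⟩ := mem_filter.1 hb
      by_cases hWb : W a b = 0
      · simp [hWb]
      obtain ⟨hle, hbb⟩ := hW a b hWb
      obtain ⟨i, hx, hy⟩ := ih b (lt_of_le_of_ne hle (ne_of_mem_erase hba)) hbb
      fin_cases i
      · exact absurd ⟨hx, hy⟩ hPb
      · simp only [Fin.mk_one] at hx hy
        rw [hx, hy]
  refine exists_eq_of_two_point_moments (e := E a - F) hs ht ha fun u v => ?_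
  simp only [Pi.sub_apply, sub_mul, sum_sub_distrib, h a u v, ← hrest u v,
    ← add_sum_erase _ _ (mem_univ a), add_sub_cancel_right]

/-- `z 0 + z 1` is a ratio of two quadratic expressions in the moments, the denominator being
`w 0 * w 1 * (x 1 - x 0) * (y 1 - y 0)`. -/
lemma add_eq_add_of_two_point_moments {w x y z w' x' y' z' : Fin 2 → ℝ}
    (hD : w 0 * w 1 * (x 1 - x 0) * (y 1 - y 0) ≠ 0)
    (h : ∀ a b c : Bool,
      ∑ i, w i * (x i ^ a.toNat * y i ^ b.toNat * z i ^ c.toNat) =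
        ∑ i, w' i * (x' i ^ a.toNat * y' i ^ b.toNat * z' i ^ c.toNat)) :
    z 0 + z 1 = z' 0 + z' 1 := by
  have moments : ∀ w x y z : Fin 2 → ℝ,
      let M := fun a b c : Bool => ∑ i, w i * (x i ^ a.toNat * y i ^ b.toNat * z i ^ c.toNat)
      M false false false * M true true false - M true false false * M false true false =
          w 0 * w 1 * (x 1 - x 0) * (y 1 - y 0) ∧
        M false false false * M true true true + M false false true * M true true false -
            M true false false * M false true true - M false true false * M true false true =
          w 0 * w 1 * (x 1 - x 0) * (y 1 - y 0) * (z 0 + z 1) := by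
    intro w x y z
    simp only [Fin.sum_univ_two, Bool.toNat_true, Bool.toNat_false, pow_one, pow_zero]
    constructor <;> ring
  obtain ⟨hdet, htr⟩ := moments w x y z
  obtain ⟨hdet', htr'⟩ := moments w' x' y' z'
  simp only [h] at hdet htr
  beta_reduce at hdet' htr'
  refine mul_left_cancel₀ hD ?_
  rw [← htr, htr', ← hdet', hdet]

end TwoPointMixtures

section Views

variable {J K : ℕ} {θ θb : Fin J → (Fin K → Bool) → ℝ} {p pb : (Fin K → Bool) → ℝ}

lemma sum_two_views_eq (hT : ∀ r, Tp θ p r = Tp θb pb r) {c : Fin J → Option ℝ} {i₁ i₂ : Fin J}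
    (h₁ : c i₁ = none) (h₂ : c i₂ = none) (h₁₂ : i₁ ≠ i₂) (a b : Bool) :
    ∑ α, p α * shiftProd c θ α * (θ i₁ α ^ a.toNat * θ i₂ α ^ b.toNat) =
      ∑ α, pb α * shiftProd c θb α * (θb i₁ α ^ a.toNat * θb i₂ α ^ b.toNat) := by
  have h :=
    sum_mul_shiftProd_eq hT
      (Function.update (Function.update c i₁ (powShift a)) i₂ (powShift b))
  have h₂' : Function.update c i₁ (powShift a) i₂ = none := by
    rwa [Function.update_of_ne h₁₂.symm]
  simp only [shiftProd_update h₂', shiftProd_update h₁, shiftFactor_powShift] at h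
  convert h using 2 <;> ring

lemma sum_three_views_eq (hT : ∀ r, Tp θ p r = Tp θb pb r) {c : Fin J → Option ℝ}
    {i₁ i₂ i₃ : Fin J} (h₁ : c i₁ = none) (h₂ : c i₂ = none) (h₃ : c i₃ = none) (h₁₂ : i₁ ≠ i₂)
    (h₁₃ : i₁ ≠ i₃) (h₂₃ : i₂ ≠ i₃) (a b d : Bool) :
    ∑ α, p α * shiftProd c θ α * (θ i₁ α ^ a.toNat * θ i₂ α ^ b.toNat * θ i₃ α ^ d.toNat) =
      ∑ α, pb α * shiftProd c θb α *
        (θb i₁ α ^ a.toNat * θb i₂ α ^ b.toNat * θb i₃ α ^ d.toNat) := by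
  have h := sum_mul_shiftProd_eq hT
    (Function.update (Function.update (Function.update c i₁ (powShift a)) i₂ (powShift b)) i₃
      (powShift d))
  have h₂' : Function.update c i₁ (powShift a) i₂ = none := by
    rwa [Function.update_of_ne h₁₂.symm]
  have h₃' : Function.update (Function.update c i₁ (powShift a)) i₂ (powShift b) i₃ = none := by
    rwa [Function.update_of_ne h₂₃.symm, Function.update_of_ne h₁₃.symm]
  simp only [shiftProd_update h₃', shiftProd_update h₂', shiftProd_update h₁,
    shiftFactor_powShift] at h
  convert h using 2 <;> ring

lemma sum_eq_sum_zero_basis {f : (Fin K → Bool) → ℝ} (m : Fin K)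
    (hf : ∀ α, α ≠ allZero K → α ≠ basis m → f α = 0) :
    ∑ α, f α = ∑ i, f (![allZero K, basis m] i) := by
  rw [Fintype.sum_eq_add _ _ (basis_ne_allZero m).symm fun α hα => hf α hα.1 hα.2,
    Fin.sum_univ_two]
  rfl

lemma exists_ne_of_ne_zero_of_ne_basis {α : Fin K → Bool} {m : Fin K} (h₀ : α ≠ allZero K)
    (hm : α ≠ basis m) : ∃ j ≠ m, α j = true := by
  by_contra! h
  cases hαm : α m
  · exact h₀ (funext fun j => by
      by_cases hj : j = m
      · subst hj; simpa [allZero] using hαm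
      · simpa [allZero] using h j hj)
  · exact hm (funext fun j => by
      by_cases hj : j = m
      · subst hj; simp [basis, hαm]
      · simpa [basis, hj] using h j hj)

end Views

section PairSpec

variable {J K : ℕ}

def pairSpec (u v : Fin K → Option ℝ) (i : Fin J) : Option ℝ :=
  if h : (i : ℕ) < K then u ⟨i, h⟩
  else if h' : (i : ℕ) < 2 * K then v ⟨i - K, by omega⟩ else none

lemma pairSpec_of_le {u v : Fin K → Option ℝ} {i : Fin J} (hi : 2 * K ≤ i) :
    pairSpec u v i = none := by
  simp [pairSpec, show ¬ (i : ℕ) < K by omega, show ¬ (i : ℕ) < 2 * K by omega]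

end PairSpec

structure StandingHyp {J K : ℕ} (Q : Fin J → Fin K → Bool)
    (θ θb : Fin J → (Fin K → Bool) → ℝ) (p pb : (Fin K → Bool) → ℝ) : Prop where
  two_mul_le : 2 * K ≤ J
  c1 : C1 Q
  r1 : R1 Q θ
  r1b : R1 Q θb
  r2 : R2 Q θ
  r2b : R2 Q θb
  p_valid : PValid p
  pb_valid : PValid pb
  eq_Tp : ∀ r, Tp θ p r = Tp θb pb r

namespace StandingHyp

variable {J K : ℕ} {Q : Fin J → Fin K → Bool} {θ θb : Fin J → (Fin K → Bool) → ℝ}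
  {p pb : (Fin K → Bool) → ℝ}

def itemA (H : StandingHyp Q θ θb p pb) (k : Fin K) : Fin J :=
  ⟨k, by have := H.two_mul_le; omega⟩

def itemB (H : StandingHyp Q θ θb p pb) (k : Fin K) : Fin J :=
  ⟨K + k, by have := H.two_mul_le; omega⟩

lemma Q_itemA (H : StandingHyp Q θ θb p pb) (k : Fin K) : Q (H.itemA k) = basis k :=
  (H.c1 k _ (by have := H.two_mul_le; omega)).1

lemma Q_itemB (H : StandingHyp Q θ θb p pb) (k : Fin K) : Q (H.itemB k) = basis k :=
  (H.c1 k (by have := H.two_mul_le; omega) _).2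

lemma itemA_ne_itemB (H : StandingHyp Q θ θb p pb) (k : Fin K) : H.itemA k ≠ H.itemB k := by
  simp only [itemA, itemB, ne_eq, Fin.ext_iff]; omega

lemma itemA_ne_of_le (H : StandingHyp Q θ θb p pb) {i : Fin J} (hi : 2 * K ≤ i) (k : Fin K) :
    H.itemA k ≠ i := by
  simp only [itemA, ne_eq, Fin.ext_iff]; omega

lemma itemB_ne_of_le (H : StandingHyp Q θ θb p pb) {i : Fin J} (hi : 2 * K ≤ i) (k : Fin K) :
    H.itemB k ≠ i := by
  simp only [itemB, ne_eq, Fin.ext_iff]; omega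

lemma pairSpec_itemA (H : StandingHyp Q θ θb p pb) (u v : Fin K → Option ℝ) (k : Fin K) :
    pairSpec u v (H.itemA k) = u k := by
  simp [pairSpec, itemA]

lemma pairSpec_itemB (H : StandingHyp Q θ θb p pb) (u v : Fin K → Option ℝ) (k : Fin K) :
    pairSpec u v (H.itemB k) = v k := by
  simp [pairSpec, itemB, show (K + k : ℕ) < 2 * K by omega]

lemma forall_item (H : StandingHyp Q θ θb p pb) {P : Fin J → Prop} (hA : ∀ k, P (H.itemA k))
    (hB : ∀ k, P (H.itemB k)) (hrest : ∀ i : Fin J, 2 * K ≤ i → P i) (i : Fin J) : P i := by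
  by_cases h₁ : (i : ℕ) < K
  · exact hA ⟨i, h₁⟩
  by_cases h₂ : (i : ℕ) < 2 * K
  · convert hB ⟨i - K, by omega⟩
    ext; simp [itemB]; omega
  · exact hrest i (by omega)

lemma shiftProd_pairSpec_ne_zero_iff (H : StandingHyp Q θ θb p pb) (u v : Fin K → Option ℝ)
    (θ' : Fin J → (Fin K → Bool) → ℝ) (α : Fin K → Bool) :
    shiftProd (pairSpec u v) θ' α ≠ 0 ↔
      ∀ k, shiftFactor (u k) (θ' (H.itemA k) α) ≠ 0 ∧
        shiftFactor (v k) (θ' (H.itemB k) α) ≠ 0 := by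
  rw [shiftProd, prod_ne_zero_iff]
  constructor
  · intro h k
    exact ⟨H.pairSpec_itemA u v k ▸ h _ (mem_univ _), H.pairSpec_itemB u v k ▸ h _ (mem_univ _)⟩
  · intro h i _
    refine H.forall_item (P := fun i => shiftFactor (pairSpec u v i) (θ' i α) ≠ 0) ?_ ?_ ?_ i
    · intro k; rw [H.pairSpec_itemA]; exact (h k).1
    · intro k; rw [H.pairSpec_itemB]; exact (h k).2
    · intro i hi; simp [pairSpec_of_le hi]

lemma allZero_lt_bar_allOne (H : StandingHyp Q θ θb p pb) {i : Fin J} {k : Fin K}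
    (hQ : Q i = basis k) : θ i (allZero K) < θb i (allOne K) :=
  allZero_lt_allOne_of_sum_mul_eq H.p_valid H.pb_valid H.r1 H.r2 H.r1b hQ
    (sum_mul_apply_eq H.eq_Tp i)

/-- Shifting item `k` by its `θ`-top and item `K + k` by its `θb`-top removes every profile
with `α k = true` from both models. -/
def zeroSpec (H : StandingHyp Q θ θb p pb) : Fin J → Option ℝ :=
  pairSpec (fun k => some (θ (H.itemA k) (allOne K)))
    (fun k => some (θb (H.itemB k) (allOne K)))

lemma shiftProd_zeroSpec_eq_zero (H : StandingHyp Q θ θb p pb) {α : Fin K → Bool}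
    (hα : α ≠ allZero K) : shiftProd H.zeroSpec θ α = 0 ∧ shiftProd H.zeroSpec θb α = 0 := by
  obtain ⟨k, hk⟩ : ∃ k, α k = true := by
    by_contra! h
    exact hα (funext fun k => by simpa [allZero] using h k)
  simp only [zeroSpec, ← not_ne_iff (b := (0 : ℝ)), H.shiftProd_pairSpec_ne_zero_iff,
    not_forall]
  refine ⟨⟨k, fun h => h.1 ?_⟩, ⟨k, fun h => h.2 ?_⟩⟩
  · rw [shiftFactor_some, H.r1.eq_top (H.Q_itemA k) hk, sub_self]
  · rw [shiftFactor_some, H.r1b.eq_top (H.Q_itemB k) hk, sub_self]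

lemma shiftProd_zeroSpec_allZero_ne_zero (H : StandingHyp Q θ θb p pb) :
    shiftProd H.zeroSpec θ (allZero K) ≠ 0 := by
  refine (H.shiftProd_pairSpec_ne_zero_iff _ _ _ _).2 fun k => ⟨?_, ?_⟩
  · exact sub_ne_zero.2 (H.r2.lt_top (H.Q_itemA k) rfl).ne
  · exact sub_ne_zero.2 (H.allZero_lt_bar_allOne (H.Q_itemB k)).ne

theorem allZero_eq_bar (H : StandingHyp Q θ θb p pb) {i : Fin J} (hi : 2 * K ≤ i) :
    θ i (allZero K) = θb i (allZero K) := by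
  have hz : H.zeroSpec i = none := pairSpec_of_le hi
  have h : ∀ b : Bool,
      p (allZero K) * (θ i (allZero K) ^ b.toNat * shiftProd H.zeroSpec θ (allZero K)) =
        pb (allZero K) * (θb i (allZero K) ^ b.toNat * shiftProd H.zeroSpec θb (allZero K)) := by
    intro b
    have h := sum_mul_shiftProd_eq H.eq_Tp (Function.update H.zeroSpec i (powShift b))
    simp only [shiftProd_update hz, shiftFactor_powShift] at h
    rwa [Fintype.sum_eq_single (allZero K) fun α hα => by
        rw [(H.shiftProd_zeroSpec_eq_zero hα).1, mul_zero, mul_zero],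
      Fintype.sum_eq_single (allZero K) fun α hα => by
        rw [(H.shiftProd_zeroSpec_eq_zero hα).2, mul_zero, mul_zero]] at h
  have h₀ := h false
  have h₁ := h true
  simp only [Bool.toNat_false, Bool.toNat_true, pow_zero, pow_one, one_mul] at h₀ h₁
  have hw : p (allZero K) * shiftProd H.zeroSpec θ (allZero K) ≠ 0 :=
    mul_ne_zero (H.p_valid.1 _).1.ne' H.shiftProd_zeroSpec_allZero_ne_zero
  refine mul_left_cancel₀ hw ?_
  linear_combination h₁ - θb i (allZero K) * h₀

def lowerTops (H : StandingHyp Q θ θb p pb) : Finset (Fin K) :=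
  univ.filter fun d => θb (H.itemA d) (allOne K) < θ (H.itemA d) (allOne K) ∧
    θb (H.itemB d) (allOne K) < θ (H.itemB d) (allOne K)

/-- Shifting `itemA j` by its `θ`-top and `itemB j` by its `θb`-top removes `α j = true` from
both models and keeps the `θ`-weights of `0` and `e_m` nonzero, unless `θ (itemB j) e_m` equals the
`θb`-top; then the roles of `θ` and `θb` are swapped, which works unless `j ∈ lowerTops`. -/
def pairConsts (H : StandingHyp Q θ θb p pb) (m j : Fin K) : Option ℝ × Option ℝ :=
  if θ (H.itemB j) (basis m) = θb (H.itemB j) (allOne K) then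
    (some (θb (H.itemA j) (allOne K)), some (θ (H.itemB j) (allOne K)))
  else (some (θ (H.itemA j) (allOne K)), some (θb (H.itemB j) (allOne K)))

lemma pairConsts_kill (H : StandingHyp Q θ θb p pb) (m : Fin K) {j : Fin K}
    {α : Fin K → Bool} (hα : α j = true) :
    (shiftFactor (H.pairConsts m j).1 (θ (H.itemA j) α) = 0 ∨
        shiftFactor (H.pairConsts m j).2 (θ (H.itemB j) α) = 0) ∧
      (shiftFactor (H.pairConsts m j).1 (θb (H.itemA j) α) = 0 ∨
        shiftFactor (H.pairConsts m j).2 (θb (H.itemB j) α) = 0) := by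
  have hA := H.r1.eq_top (H.Q_itemA j) hα
  have hB := H.r1.eq_top (H.Q_itemB j) hα
  have hAb := H.r1b.eq_top (H.Q_itemA j) hα
  have hBb := H.r1b.eq_top (H.Q_itemB j) hα
  unfold pairConsts
  split_ifs <;> simp [hA, hB, hAb, hBb]

lemma pairConsts_ne_zero (H : StandingHyp Q θ θb p pb) {m j : Fin K} (hjm : j ≠ m)
    (hj : j ∉ H.lowerTops) {β : Fin K → Bool} (hβ : β = allZero K ∨ β = basis m) :
    shiftFactor (H.pairConsts m j).1 (θ (H.itemA j) β) ≠ 0 ∧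
      shiftFactor (H.pairConsts m j).2 (θ (H.itemB j) β) ≠ 0 := by
  have hβj : β j = false := by rcases hβ with rfl | rfl <;> simp [allZero, basis, hjm]
  have hA := H.r2.lt_top (H.Q_itemA j) hβj
  have hB := H.r2.lt_top (H.Q_itemB j) hβj
  unfold pairConsts
  split_ifs with hc
  · have htop : θ (H.itemA j) (allOne K) ≤ θb (H.itemA j) (allOne K) := by
      by_contra! h
      exact hj (mem_filter.2 ⟨mem_univ _, h,
        hc ▸ H.r2.lt_top (H.Q_itemB j) (by simp [basis, hjm])⟩)
    exact ⟨sub_ne_zero.2 (hA.trans_le htop).ne, sub_ne_zero.2 hB.ne⟩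
  · refine ⟨sub_ne_zero.2 hA.ne, ?_⟩
    rcases hβ with rfl | rfl
    · exact sub_ne_zero.2 (H.allZero_lt_bar_allOne (H.Q_itemB j)).ne
    · exact sub_ne_zero.2 hc

/-- The shifts at node `a` for target attribute `m`: in `θ` only the profiles `0` and `e_m`
survive; in `θb` the survivors lie below `a` once `m ∈ lowerTops`. -/
def nodeSpec (H : StandingHyp Q θ θb p pb) (m : Fin K) (a : Fin K → Bool) :
    Fin J → Option ℝ :=
  pairSpec
    (fun j => if j = m then none
      else if j ∈ H.lowerTops then some (θ (H.itemA j) (allOne K)) else (H.pairConsts m j).1)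
    (fun j => if j ∈ H.lowerTops then (if a j then none else some (θb (H.itemB j) (allOne K)))
      else if j = m then none else (H.pairConsts m j).2)

lemma shiftProd_nodeSpec_eq_zero (H : StandingHyp Q θ θb p pb) {m j : Fin K} (hjm : j ≠ m)
    (a : Fin K → Bool) {α : Fin K → Bool} (hα : α j = true) :
    shiftProd (H.nodeSpec m a) θ α = 0 := by
  by_contra h
  have hj := ((H.shiftProd_pairSpec_ne_zero_iff _ _ _ _).1 h j)
  by_cases hD : j ∈ H.lowerTops
  · simp only [if_neg hjm, if_pos hD] at hj
    exact hj.1 (by rw [shiftFactor_some, H.r1.eq_top (H.Q_itemA j) hα, sub_self])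
  · simp only [if_neg hjm, if_neg hD] at hj
    exact (H.pairConsts_kill m hα).1.elim hj.1 hj.2

lemma shiftProd_nodeSpec_bar_eq_zero (H : StandingHyp Q θ θb p pb) {m j : Fin K}
    {a α : Fin K → Bool} (hα : α j = true)
    (hj : (j ∈ H.lowerTops ∧ a j = false) ∨ (j ∉ H.lowerTops ∧ j ≠ m)) :
    shiftProd (H.nodeSpec m a) θb α = 0 := by
  by_contra h
  have hj' := ((H.shiftProd_pairSpec_ne_zero_iff _ _ _ _).1 h j)
  rcases hj with ⟨hD, ha⟩ | ⟨hD, hjm⟩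
  · simp only [if_pos hD, ha, Bool.false_eq_true, if_false] at hj'
    exact hj'.2 (by rw [shiftFactor_some, H.r1b.eq_top (H.Q_itemB j) hα, sub_self])
  · simp only [if_neg hD, if_neg hjm] at hj'
    exact (H.pairConsts_kill m hα).2.elim hj'.1 hj'.2

lemma shiftProd_nodeSpec_ne_zero (H : StandingHyp Q θ θb p pb) {m : Fin K} {a : Fin K → Bool}
    (ha : ∀ j ∈ H.lowerTops, a j = true) {β : Fin K → Bool}
    (hβ : β = allZero K ∨ β = basis m) : shiftProd (H.nodeSpec m a) θ β ≠ 0 := by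
  refine (H.shiftProd_pairSpec_ne_zero_iff _ _ _ _).2 fun j => ?_
  by_cases hjm : j = m
  · subst hjm
    by_cases hD : j ∈ H.lowerTops <;> simp [hD, ha]
  have hβj : β j = false := by rcases hβ with rfl | rfl <;> simp [allZero, basis, hjm]
  by_cases hD : j ∈ H.lowerTops
  · simpa [hjm, hD, ha j hD, sub_eq_zero] using (H.r2.lt_top (H.Q_itemA j) hβj).ne
  · simpa [hjm, hD] using H.pairConsts_ne_zero hjm hD hβ

lemma shiftProd_nodeSpec_self_ne_zero (H : StandingHyp Q θ θb p pb) {m : Fin K}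
    {a β : Fin K → Bool} (h : shiftProd (H.nodeSpec m a) θb β ≠ 0) :
    shiftProd (H.nodeSpec m β) θb β ≠ 0 := by
  refine (H.shiftProd_pairSpec_ne_zero_iff _ _ _ _).2 fun j => ?_
  have hj := (H.shiftProd_pairSpec_ne_zero_iff _ _ _ _).1 h j
  refine ⟨hj.1, ?_⟩
  by_cases hD : j ∈ H.lowerTops
  · cases hβj : β j
    · simpa [hD, hβj, sub_eq_zero] using (H.r2b.lt_top (H.Q_itemB j) hβj).ne
    · simp [hD]
  · simpa [hD] using hj.2

lemma le_of_shiftProd_nodeSpec_ne_zero (H : StandingHyp Q θ θb p pb) {m : Fin K}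
    (hm : m ∈ H.lowerTops) {a β : Fin K → Bool} (h : shiftProd (H.nodeSpec m a) θb β ≠ 0) :
    β ≤ a := by
  intro j
  cases hβj : β j
  · exact Bool.false_le _
  cases haj : a j
  · refine absurd (H.shiftProd_nodeSpec_bar_eq_zero hβj ?_) h
    by_cases hD : j ∈ H.lowerTops
    · exact Or.inl ⟨hD, haj⟩
    · exact Or.inr ⟨hD, fun hjm => hD (hjm ▸ hm)⟩
  · exact le_rfl

lemma nodeSpec_itemA_self (H : StandingHyp Q θ θb p pb) (m : Fin K) (a : Fin K → Bool) :
    H.nodeSpec m a (H.itemA m) = none := by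
  simp [nodeSpec, pairSpec_itemA]

lemma sum_nodeSpec_eq_sum_zero_basis (H : StandingHyp Q θ θb p pb) (m : Fin K)
    (a : Fin K → Bool) (f : (Fin K → Bool) → ℝ) :
    ∑ α, p α * shiftProd (H.nodeSpec m a) θ α * f α =
      ∑ i, p (![allZero K, basis m] i) * shiftProd (H.nodeSpec m a) θ (![allZero K, basis m] i) *
        f (![allZero K, basis m] i) := by
  refine sum_eq_sum_zero_basis m fun α h₀ h₁ => ?_
  obtain ⟨j, hjm, hαj⟩ := exists_ne_of_ne_zero_of_ne_basis h₀ h₁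
  rw [H.shiftProd_nodeSpec_eq_zero hjm a hαj, mul_zero, zero_mul]

lemma sum_nodeSpec_bar_eq_sum_zero_basis (H : StandingHyp Q θ θb p pb) (hD : H.lowerTops = ∅)
    (m : Fin K) (a : Fin K → Bool) (f : (Fin K → Bool) → ℝ) :
    ∑ α, pb α * shiftProd (H.nodeSpec m a) θb α * f α =
      ∑ i, pb (![allZero K, basis m] i) *
        shiftProd (H.nodeSpec m a) θb (![allZero K, basis m] i) * f (![allZero K, basis m] i) := by
  refine sum_eq_sum_zero_basis m fun α h₀ h₁ => ?_
  obtain ⟨j, hjm, hαj⟩ := exists_ne_of_ne_zero_of_ne_basis h₀ h₁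
  rw [H.shiftProd_nodeSpec_bar_eq_zero hαj (Or.inr ⟨by simp [hD], hjm⟩), mul_zero, zero_mul]

/-- In `θ` the views `itemA m` and the `C2` item `j'` separate `0` from `e_m`. Peeling puts every
`θb`-profile at the `θ`-value of `0` in the first view (the value at `e_m` is the `θ`-top, out of
reach for `θb` when `m ∈ lowerTops`), and then the first moments of that view cannot agree. -/
theorem lowerTops_eq_empty (H : StandingHyp Q θ θb p pb) (hC2 : C2 θ) : H.lowerTops = ∅ := by
  refine eq_empty_of_forall_notMem fun m hm => ?_
  obtain ⟨j', hj', hsep⟩ := hC2 m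
  let atom : Fin 2 → Fin K → Bool := ![allZero K, basis m]
  let s : Fin 2 → ℝ := fun i => θ (H.itemA m) (atom i)
  let W : (Fin K → Bool) → (Fin K → Bool) → ℝ := fun a β => pb β * shiftProd (H.nodeSpec m a) θb β
  have hmom : ∀ a (u v : Bool),
      ∑ i, p (atom i) * shiftProd (H.nodeSpec m a) θ (atom i) *
          (s i ^ u.toNat * θ j' (atom i) ^ v.toNat) =
        ∑ β, W a β * (θb (H.itemA m) β ^ u.toNat * θb j' β ^ v.toNat) := fun a u v => by
    have h := sum_two_views_eq H.eq_Tp (H.nodeSpec_itemA_self m a) (pairSpec_of_le hj')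
      (H.itemA_ne_of_le hj' m) u v
    rwa [H.sum_nodeSpec_eq_sum_zero_basis] at h
  have hs : s 0 ≠ s 1 := (H.r2.allZero_lt_basis H.r1 (H.Q_itemA m)).ne
  have hW : ∀ a β, W a β ≠ 0 → β ≤ a ∧ W β β ≠ 0 := fun a β h =>
    ⟨H.le_of_shiftProd_nodeSpec_ne_zero hm (right_ne_zero_of_mul h), mul_ne_zero
      (left_ne_zero_of_mul h) (H.shiftProd_nodeSpec_self_ne_zero (right_ne_zero_of_mul h))⟩
  have hflat : ∀ β, W (allOne K) β ≠ 0 → θb (H.itemA m) β = s 0 := by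
    intro β hβ
    obtain ⟨i, hxi, -⟩ :=
      exists_eq_of_truncated_moments hs (Ne.symm hsep) hW hmom β (hW _ _ hβ).2
    fin_cases i
    · exact hxi
    · have htop : s 1 = θ (H.itemA m) (allOne K) := H.r1.eq_top (H.Q_itemA m) (basis_self m)
      have := (H.r1b.le_top (H.itemA m) β).trans_lt (mem_filter.1 hm).2.1
      simp only [Fin.mk_one] at hxi
      linarith
  have hsum : ∑ β, W (allOne K) β * θb (H.itemA m) β = s 0 * ∑ β, W (allOne K) β := by
    rw [mul_sum]
    refine sum_congr rfl fun β _ => ?_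
    by_cases hβ : W (allOne K) β = 0
    · simp [hβ]
    · rw [hflat β hβ, mul_comm]
  have h₀ := hmom (allOne K) false false
  have h₁ := hmom (allOne K) true false
  simp only [Fin.sum_univ_two, Bool.toNat_false, Bool.toNat_true, pow_zero, pow_one, mul_one]
    at h₀ h₁
  have hw : p (atom 1) * shiftProd (H.nodeSpec m (allOne K)) θ (atom 1) ≠ 0 :=
    mul_ne_zero (H.p_valid.1 _).1.ne' (H.shiftProd_nodeSpec_ne_zero (fun _ _ => rfl) (Or.inr rfl))
  refine mul_ne_zero hw (sub_ne_zero.2 hs.symm) ?_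
  linear_combination h₁ - s 0 * h₀ + hsum

/-- With `lowerTops = ∅` both models collapse onto the profiles `0` and `e_k`, which the views
`itemA k` and `itemB k` separate in `θ`; the three-view moments then give the sum of the two values
of a later item, and its value at `0` is already known. -/
theorem basis_eq_bar (H : StandingHyp Q θ θb p pb) (hD : H.lowerTops = ∅) {j : Fin J}
    (hj : 2 * K ≤ j) (k : Fin K) : θ j (basis k) = θb j (basis k) := by
  let c := H.nodeSpec k (allOne K)
  let atom : Fin 2 → Fin K → Bool := ![allZero K, basis k]
  have hB : c (H.itemB k) = none := by simp [c, nodeSpec, pairSpec_itemB, hD]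
  have hmom : ∀ a b d : Bool,
      ∑ i, p (atom i) * shiftProd c θ (atom i) * (θ (H.itemA k) (atom i) ^ a.toNat *
        θ (H.itemB k) (atom i) ^ b.toNat * θ j (atom i) ^ d.toNat) =
      ∑ i, pb (atom i) * shiftProd c θb (atom i) * (θb (H.itemA k) (atom i) ^ a.toNat *
        θb (H.itemB k) (atom i) ^ b.toNat * θb j (atom i) ^ d.toNat) := fun a b d => by
    have h := sum_three_views_eq H.eq_Tp (H.nodeSpec_itemA_self k _) hB (pairSpec_of_le hj)
      (H.itemA_ne_itemB k) (H.itemA_ne_of_le hj k) (H.itemB_ne_of_le hj k) a b d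
    rwa [H.sum_nodeSpec_eq_sum_zero_basis, H.sum_nodeSpec_bar_eq_sum_zero_basis hD] at h
  have hw : ∀ i, p (atom i) * shiftProd c θ (atom i) ≠ 0 := fun i =>
    mul_ne_zero (H.p_valid.1 _).1.ne'
      (H.shiftProd_nodeSpec_ne_zero (by simp [hD]) (by fin_cases i <;> simp [atom]))
  have hsep : ∀ l : Fin J, Q l = basis k → θ l (atom 1) - θ l (atom 0) ≠ 0 := fun l hl =>
    sub_ne_zero.2 (H.r2.allZero_lt_basis H.r1 hl).ne'
  have hsum := add_eq_add_of_two_point_moments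
    (mul_ne_zero (mul_ne_zero (mul_ne_zero (hw 0) (hw 1)) (hsep _ (H.Q_itemA k)))
      (hsep _ (H.Q_itemB k))) hmom
  simp only [atom, Matrix.cons_val_zero, Matrix.cons_val_one] at hsum
  linarith [H.allZero_eq_bar hj]

end StandingHyp

end

theorem step2_theta_basis_eq_general
    {J K : ℕ} (hJ : 2 * K ≤ J) (Q : Fin J → Fin K → Bool)
    (θ θb : Fin J → (Fin K → Bool) → ℝ) (p pb : (Fin K → Bool) → ℝ)
    (hp : PValid p) (hpb : PValid pb)
    (hR1 : R1 Q θ) (hR1b : R1 Q θb) (hR2 : R2 Q θ) (hR2b : R2 Q θb)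
    (hC1 : C1 Q) (hC2 : C2 θ)
    (hT : ∀ r : Fin J → Bool, Tp θ p r = Tp θb pb r) :
    ∀ j : Fin J, 2 * K ≤ (j : ℕ) → ∀ k : Fin K,
      θ j (basis k) = θb j (basis k) := by
  have H : StandingHyp Q θ θb p pb := ⟨hJ, hC1, hR1, hR1b, hR2, hR2b, hp, hpb, hT⟩
  exact fun j hj k => H.basis_eq_bar (H.lowerTops_eq_empty hC2) hj k

/-- **Step 2.** Under the standing hypotheses, `θ_{j,e_k} = θ̄_{j,e_k}` for every
item `j > 2K` and every `k`. -/
theorem step2_theta_basis_eq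
    {J K : ℕ} (hJ : 2 * K ≤ J) (Q : Fin J → Fin K → Bool)
    (θ θb : Fin J → (Fin K → Bool) → ℝ) (p pb : (Fin K → Bool) → ℝ)
    (hθ : ThetaValid θ) (hθb : ThetaValid θb) (hp : PValid p) (hpb : PValid pb)
    (hR1 : R1 Q θ) (hR1b : R1 Q θb) (hR2 : R2 Q θ) (hR2b : R2 Q θb)
    (hC1 : C1 Q) (hC2 : C2 θ)
    (hT : ∀ r : Fin J → Bool, Tp θ p r = Tp θb pb r) :
    ∀ j : Fin J, 2 * K ≤ (j : ℕ) → ∀ k : Fin K,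
      θ j (basis k) = θb j (basis k) :=
  step2_theta_basis_eq_general hJ Q θ θb p pb hp hpb hR1 hR1b hR2 hR2b hC1 hC2 hT
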